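/- arXiv:0803.3958 — 2 statements merged into one kernel-verified Lean document; each statement's English description precedes it below -/
import Mathlib

section
/- Let n ≥ 3 and let ξ ∈ ℝⁿ be nonzero. Let S denote the unit sphere of the orthogonal complement ξ^⊥ (an (n−1)-dimensional inner product space), equipped with its spherical (volume) measure σ. For any symmetric bilinear form f on ℝⁿ, the integral ∫_S f(ω, ω)² dσ(ω) equals 0 if and only if there exists v ∈ ℝⁿ such that f(a, b) = ½(⟨ξ, a⟩⟨v, b⟩ + ⟨v, a⟩⟨ξ, b⟩) for all a, b ∈ ℝⁿ. -/
/-!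
A continuous nonnegative function on the unit sphere of `ξ^⊥` has zero integral only if it
vanishes identically, since the spherical measure charges every open set. So the integral of
`f(ω, ω)²` vanishes iff the quadratic form of `f` vanishes on the unit sphere of `ξ^⊥`, hence by
homogeneity and polarization iff `f` vanishes on `ξ^⊥ × ξ^⊥`. Writing `a = a' + (⟪ξ, a⟫ / ‖ξ‖²) ξ`
with `a' ∈ ξ^⊥`, such an `f` is determined by `f ξ ·`, and the Riesz representative of `f ξ ·`
yields the vector `v` of a potential form.
-/

open MeasureTheory
open scoped RealInnerProductSpace

theorem Continuous.integral_eq_zero_iff_of_nonneg {X : Type*} [TopologicalSpace X] [CompactSpace X]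
    [MeasurableSpace X] [OpensMeasurableSpace X] {μ : Measure X} [IsFiniteMeasure μ]
    [μ.IsOpenPosMeasure] {g : X → ℝ} (hg : Continuous g) (hg₀ : 0 ≤ g) :
    ∫ x, g x ∂μ = 0 ↔ g = 0 := by
  have hint : Integrable g μ := hg.integrable_of_hasCompactSupport (isClosed_tsupport g).isCompact
  rw [MeasureTheory.integral_eq_zero_iff_of_nonneg hg₀ hint]
  exact hg.ae_eq_iff_eq μ continuous_zero

namespace LinearMap

theorem continuous_apply_self {E : Type*} [NormedAddCommGroup E] [NormedSpace ℝ E]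
    [FiniteDimensional ℝ E] (f : E →ₗ[ℝ] E →ₗ[ℝ] ℝ) : Continuous fun x => f x x :=
  f.toContinuousBilinearMap.continuous.clm_apply continuous_id

theorem IsAlt.eq_zero_of_symm {R M N : Type*} [CommRing R] [AddCommGroup M] [Module R M]
    [AddCommGroup N] [Module R N] [IsAddTorsionFree N] {B : M →ₗ[R] M →ₗ[R] N} (hB : B.IsAlt)
    (hsymm : ∀ x y, B x y = B y x) : B = 0 := by
  ext x y
  exact neg_eq_self.1 ((hB.neg x y).trans (hsymm y x))

theorem isAlt_of_forall_sphere {F : Type*} [NormedAddCommGroup F] [NormedSpace ℝ F]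
    {B : F →ₗ[ℝ] F →ₗ[ℝ] ℝ} (h : ∀ ω : Metric.sphere (0 : F) 1, B ω ω = 0) : B.IsAlt := by
  intro x
  rcases eq_or_ne x 0 with rfl | hx
  · simp
  have hx' : ‖x‖ ≠ 0 := norm_ne_zero_iff.2 hx
  have hunit : ‖x‖⁻¹ • x ∈ Metric.sphere (0 : F) 1 := by
    rw [mem_sphere_zero_iff_norm, norm_smul, norm_inv, norm_norm, inv_mul_cancel₀ hx']
  calc B x x = ‖x‖ ^ 2 * B (‖x‖⁻¹ • x) (‖x‖⁻¹ • x) := by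
        simp only [map_smul, smul_apply, smul_eq_mul]; field_simp
    _ = 0 := by rw [h ⟨_, hunit⟩, mul_zero]

theorem eq_zero_iff_forall_sphere_apply_self {F : Type*} [NormedAddCommGroup F]
    [NormedSpace ℝ F] {B : F →ₗ[ℝ] F →ₗ[ℝ] ℝ} (hsymm : ∀ x y, B x y = B y x) :
    B = 0 ↔ ∀ ω : Metric.sphere (0 : F) 1, B ω ω = 0 :=
  ⟨fun h ω => by rw [h, zero_apply, zero_apply],
    fun h => (isAlt_of_forall_sphere h).eq_zero_of_symm hsymm⟩

end LinearMap

variable {E : Type*} [NormedAddCommGroup E] [InnerProductSpace ℝ E]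

def IsPotential (ξ : E) (f : E →ₗ[ℝ] E →ₗ[ℝ] ℝ) : Prop :=
  ∃ v : E, ∀ a b : E, f a b = (1 / 2) * (⟪ξ, a⟫ * ⟪v, b⟫ + ⟪v, a⟫ * ⟪ξ, b⟫)

theorem isPotential_iff_compl₁₂_orthogonal_eq_zero [FiniteDimensional ℝ E] {ξ : E}
    {f : E →ₗ[ℝ] E →ₗ[ℝ] ℝ} (hsymm : ∀ a b, f a b = f b a) :
    IsPotential ξ f ↔ f.compl₁₂ (ℝ ∙ ξ)ᗮ.subtype (ℝ ∙ ξ)ᗮ.subtype = 0 := by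
  constructor
  · rintro ⟨v, hv⟩
    ext ⟨x, hx⟩ ⟨y, hy⟩
    rw [Submodule.mem_orthogonal_singleton_iff_inner_right] at hx hy
    simp [hv, hx, hy]
  · intro h
    set c := ‖ξ‖ ^ 2
    obtain ⟨w, hw⟩ : ∃ w : E, ∀ b, ⟪w, b⟫ = f ξ b :=
      ⟨(InnerProductSpace.toDual ℝ E).symm (f ξ).toContinuousLinearMap,
        fun _ => InnerProductSpace.toDual_symm_apply⟩
    have hproj (a : E) : a - (⟪ξ, a⟫ / c) • ξ ∈ (ℝ ∙ ξ)ᗮ := by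
      simpa [Submodule.starProjection_singleton] using
        (ℝ ∙ ξ).sub_starProjection_mem_orthogonal a
    refine ⟨(2 / c) • w - (f ξ ξ / c ^ 2) • ξ, fun a b => ?_⟩
    have hab := LinearMap.congr_fun₂ h ⟨_, hproj a⟩ ⟨_, hproj b⟩
    simp only [LinearMap.compl₁₂_apply, Submodule.subtype_apply, LinearMap.zero_apply, map_sub,
      map_smul, LinearMap.sub_apply, LinearMap.smul_apply, smul_eq_mul] at hab
    simp only [inner_sub_left, real_inner_smul_left, hw]
    linear_combination hab + (⟪ξ, b⟫ / c) * hsymm a ξ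

theorem integral_sq_eq_zero_iff_potential_general
    (n : ℕ) (ξ : EuclideanSpace ℝ (Fin n))
    (f : EuclideanSpace ℝ (Fin n) →ₗ[ℝ] EuclideanSpace ℝ (Fin n) →ₗ[ℝ] ℝ)
    (hsymm : ∀ a b, f a b = f b a) :
    (∫ ω : Metric.sphere (0 : (ℝ ∙ ξ)ᗮ) 1,
        (f ((ω : (ℝ ∙ ξ)ᗮ) : EuclideanSpace ℝ (Fin n)) ((ω : (ℝ ∙ ξ)ᗮ) : EuclideanSpace ℝ (Fin n))) ^ 2
        ∂((volume : Measure (ℝ ∙ ξ)ᗮ).toSphere)) = 0 ↔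
      ∃ v : EuclideanSpace ℝ (Fin n), ∀ a b : EuclideanSpace ℝ (Fin n),
        f a b = (1 / 2) * (⟪ξ, a⟫ * ⟪v, b⟫ + ⟪v, a⟫ * ⟪ξ, b⟫) := by
  have hcont : Continuous fun ω : Metric.sphere (0 : (ℝ ∙ ξ)ᗮ) 1 =>
      (f ((ω : (ℝ ∙ ξ)ᗮ) : EuclideanSpace ℝ (Fin n)) ((ω : (ℝ ∙ ξ)ᗮ) : EuclideanSpace ℝ (Fin n))) ^ 2 :=
    (f.continuous_apply_self.comp (continuous_subtype_val.comp continuous_subtype_val)).pow 2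
  rw [hcont.integral_eq_zero_iff_of_nonneg (fun _ => sq_nonneg _), funext_iff, ← IsPotential, isPotential_iff_compl₁₂_orthogonal_eq_zero hsymm,
    LinearMap.eq_zero_iff_forall_sphere_apply_self
      (B := f.compl₁₂ (ℝ ∙ ξ)ᗮ.subtype (ℝ ∙ ξ)ᗮ.subtype) fun x y => hsymm x y]
  simp

/-- For `n ≥ 3` and `0 ≠ ξ ∈ ℝⁿ`, the integral of `f(ω,ω)²` over the
unit sphere of the hyperplane `ξ^⊥` (with its spherical measure) vanishes iff the
symmetric bilinear form `f` is potential, i.e. `f = ½(ξ ⊗ v + v ⊗ ξ)` for some `v`. -/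
theorem integral_sq_eq_zero_iff_potential
    (n : ℕ) (hn : 3 ≤ n) (ξ : EuclideanSpace ℝ (Fin n)) (hξ : ξ ≠ 0)
    (f : EuclideanSpace ℝ (Fin n) →ₗ[ℝ] EuclideanSpace ℝ (Fin n) →ₗ[ℝ] ℝ)
    (hsymm : ∀ a b, f a b = f b a) :
    (∫ ω : Metric.sphere (0 : (ℝ ∙ ξ)ᗮ) 1,
        (f ((ω : (ℝ ∙ ξ)ᗮ) : EuclideanSpace ℝ (Fin n)) ((ω : (ℝ ∙ ξ)ᗮ) : EuclideanSpace ℝ (Fin n))) ^ 2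
        ∂((volume : Measure (ℝ ∙ ξ)ᗮ).toSphere)) = 0 ↔
      ∃ v : EuclideanSpace ℝ (Fin n), ∀ a b : EuclideanSpace ℝ (Fin n),
        f a b = (1 / 2) * (⟪ξ, a⟫ * ⟪v, b⟫ + ⟪v, a⟫ * ⟪ξ, b⟫) :=
  integral_sq_eq_zero_iff_potential_general n ξ f hsymm
end

section
/- Let n ≥ 3 and let ξ ∈ ℝⁿ be nonzero. Let S denote the unit sphere of the orthogonal complement ξ^⊥, equipped with its spherical (volume) measure σ. If f is a nonzero symmetric bilinear form on ℝⁿ satisfying f(ξ, b) = 0 for all b ∈ ℝⁿ, then ∫_S f(ω, ω)² dσ(ω) > 0. -/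
/-!
Since `f` is symmetric and `f(ξ, ·) = 0`, `f` vanishes whenever one argument lies in `ℝ ∙ ξ`,
so its restriction to `ξ^⊥` is still a nonzero symmetric form; by polarization it is then
nonzero on the diagonal, say `f(w, w) ≠ 0` with `w ∈ ξ^⊥`. The integrand `f(ω, ω)²` is
continuous, nonnegative and nonzero at `w / ‖w‖`, and the spherical measure charges every
nonempty open set.
-/

open MeasureTheory

theorem LinearMap.BilinForm.exists_mem_apply_self_ne_zero_of_codisjoint {R M : Type*}
    [CommRing R] [Invertible (2 : R)] [AddCommGroup M] [Module R M] {B : LinearMap.BilinForm R M}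
    (hB : B ≠ 0) (hsymm : LinearMap.IsSymm B) {V W : Submodule R M} (hVW : Codisjoint V W)
    (hV : ∀ v ∈ V, ∀ x, B v x = 0) : ∃ w ∈ W, B w w ≠ 0 := by
  have hdecomp : ∀ x, ∃ w ∈ W, ∀ y, B x y = B w y := by
    intro x
    obtain ⟨v, hv, w, hw, rfl⟩ := Submodule.mem_sup.1 (hVW.eq_top ▸ Submodule.mem_top (x := x))
    exact ⟨w, hw, fun y => by simp [hV v hv]⟩
  have hrestrict : B.domRestrict₁₂ W W ≠ 0 := by
    intro h
    apply hB
    ext x y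
    obtain ⟨w, hw, hx⟩ := hdecomp x
    obtain ⟨w', hw', hy⟩ := hdecomp y
    rw [hx, ← hsymm.eq, hy, hsymm.eq]
    exact LinearMap.congr_fun₂ h ⟨w, hw⟩ ⟨w', hw'⟩
  obtain ⟨⟨w, hw⟩, hne⟩ := exists_bilinForm_self_ne_zero hrestrict (hsymm.domRestrict W)
  exact ⟨w, hw, hne⟩

theorem MeasureTheory.Measure.integral_toSphere_sq_apply_self_pos {E : Type*}
    [NormedAddCommGroup E] [NormedSpace ℝ E] [FiniteDimensional ℝ E] [MeasurableSpace E]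
    [BorelSpace E] (μ : Measure E) [μ.IsAddHaarMeasure] (B : LinearMap.BilinForm ℝ E) {x : E}
    (hx : B x x ≠ 0) : 0 < ∫ ω : Metric.sphere (0 : E) 1, (B ω ω) ^ 2 ∂μ.toSphere := by
  have hx0 : x ≠ 0 := by rintro rfl; simp at hx
  have hcont : Continuous fun ω : Metric.sphere (0 : E) 1 => (B ω ω) ^ 2 :=
    (B.toContinuousBilinearMap.continuous₂.comp
      (continuous_subtype_val.prodMk continuous_subtype_val)).pow 2
  refine hcont.integral_pos_of_hasCompactSupport_nonneg_nonzero (x := ⟨‖x‖⁻¹ • x, ?_⟩)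
    (.of_compactSpace _) (fun ω => sq_nonneg _) ?_
  · simp [norm_smul, hx0]
  · simp [hx, hx0]

theorem integral_sq_pos_of_solenoidal_general
    (n : ℕ) (ξ : EuclideanSpace ℝ (Fin n))
    (f : EuclideanSpace ℝ (Fin n) →ₗ[ℝ] EuclideanSpace ℝ (Fin n) →ₗ[ℝ] ℝ)
    (hsymm : ∀ a b, f a b = f b a)
    (hf : f ≠ 0)
    (hsol : ∀ b : EuclideanSpace ℝ (Fin n), f ξ b = 0) :
    0 < ∫ ω : Metric.sphere (0 : (ℝ ∙ ξ)ᗮ) 1,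
        (f ((ω : (ℝ ∙ ξ)ᗮ) : EuclideanSpace ℝ (Fin n)) ((ω : (ℝ ∙ ξ)ᗮ) : EuclideanSpace ℝ (Fin n))) ^ 2
        ∂((volume : Measure (ℝ ∙ ξ)ᗮ).toSphere) := by
  have hspan : ∀ v ∈ ℝ ∙ ξ, ∀ b, f v b = 0 := by
    intro v hv b
    obtain ⟨c, rfl⟩ := Submodule.mem_span_singleton.1 hv
    simp [hsol]
  obtain ⟨w, hw, hfw⟩ := LinearMap.BilinForm.exists_mem_apply_self_ne_zero_of_codisjoint hf
    ⟨hsymm⟩ (Submodule.isCompl_orthogonal (ℝ ∙ ξ)).codisjoint hspan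
  exact (volume : Measure (ℝ ∙ ξ)ᗮ).integral_toSphere_sq_apply_self_pos
    (f.domRestrict₁₂ (ℝ ∙ ξ)ᗮ (ℝ ∙ ξ)ᗮ) (x := ⟨w, hw⟩) hfw

/-- For `n ≥ 3` and `0 ≠ ξ ∈ ℝⁿ`, if `f` is a nonzero symmetric
bilinear form on `ℝⁿ` that is solenoidal at frequency `ξ` (i.e. `f(ξ, ·) = 0`), then
the integral of `f(ω,ω)²` over the unit sphere of `ξ^⊥` (with its spherical measure)
is strictly positive: the normal operator is elliptic on solenoidal tensors. -/
theorem integral_sq_pos_of_solenoidal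
    (n : ℕ) (hn : 3 ≤ n) (ξ : EuclideanSpace ℝ (Fin n)) (hξ : ξ ≠ 0)
    (f : EuclideanSpace ℝ (Fin n) →ₗ[ℝ] EuclideanSpace ℝ (Fin n) →ₗ[ℝ] ℝ)
    (hsymm : ∀ a b, f a b = f b a)
    (hf : f ≠ 0)
    (hsol : ∀ b : EuclideanSpace ℝ (Fin n), f ξ b = 0) :
    0 < ∫ ω : Metric.sphere (0 : (ℝ ∙ ξ)ᗮ) 1,
        (f ((ω : (ℝ ∙ ξ)ᗮ) : EuclideanSpace ℝ (Fin n)) ((ω : (ℝ ∙ ξ)ᗮ) : EuclideanSpace ℝ (Fin n))) ^ 2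
        ∂((volume : Measure (ℝ ∙ ξ)ᗮ).toSphere) :=
  integral_sq_pos_of_solenoidal_general n ξ f hsymm hf hsol
end
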